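/- arXiv:2509.19317 — 6 statements merged into one kernel-verified Lean document; each statement's English description precedes it below -/
import Mathlib

section
/- Let 0 < b < 1, x* = 1/(b-1), and x₀ > x*. For each k ∈ ℤ set x_k = b^{-k}(x₀ - x*) + x* and I_k = [b·x_k, b·x_{k+1}). If a real number x belongs to I_k for some k ∈ ℤ, then b(x - 1) belongs to I_{k-1}. -/
/-! The affine map `y ↦ b y - 1` fixes `x*` and multiplies distances from `x*` by `b`, so it sends
`x_k` to `x_{k-1}`. Since `x ∈ I_k` means `x - 1 ∈ [x_{k-1}, x_k)`, scaling by `b > 0` gives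
`b (x - 1) ∈ I_{k-1}`. -/

section

variable {K : Type*} [Field K]

lemma add_one_eq_mul_one_div_sub_one {b : K} (hb : b ≠ 1) :
    1 / (b - 1) + 1 = b * (1 / (b - 1)) := by
  have : b - 1 ≠ 0 := sub_ne_zero.mpr hb
  field_simp
  ring

lemma zpow_neg_mul_add_add_one {b xs : K} (hb : b ≠ 0) (hxs : xs + 1 = b * xs)
    (c : K) (k : ℤ) : b ^ (-k) * c + xs + 1 = b * (b ^ (-(k + 1)) * c + xs) := by
  rw [show -k = 1 + -(k + 1) by ring, zpow_add₀ hb, zpow_one, add_assoc, hxs]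
  ring

variable [LinearOrder K] [IsStrictOrderedRing K]

lemma mul_sub_one_mem_Ico_mul_iff {b u v x : K} (hb : 0 < b) :
    b * (x - 1) ∈ Set.Ico (b * u) (b * v) ↔ x ∈ Set.Ico (u + 1) (v + 1) := by
  simp only [Set.mem_Ico, mul_le_mul_iff_right₀ hb, mul_lt_mul_iff_right₀ hb, le_sub_iff_add_le,
    sub_lt_iff_lt_add]

end

theorem stmt_2_general (b x₀ : ℝ) (hb0 : 0 < b) (hb1 : b < 1)
    (xs : ℝ) (hxs : xs = 1 / (b - 1))
    (X : ℤ → ℝ) (hX : ∀ k : ℤ, X k = b ^ (-k) * (x₀ - xs) + xs)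
    (I : ℤ → Set ℝ) (hI : ∀ k : ℤ, I k = Set.Ico (b * X k) (b * X (k + 1))) :
    ∀ k : ℤ, ∀ x : ℝ, x ∈ I k → b * (x - 1) ∈ I (k - 1) := by
  intro k x hx
  have hfix : xs + 1 = b * xs := hxs ▸ add_one_eq_mul_one_div_sub_one hb1.ne
  have hstep : ∀ m : ℤ, X m + 1 = b * X (m + 1) := fun m => by
    simp only [hX]
    exact zpow_neg_mul_add_add_one hb0.ne' hfix _ m
  rw [hI] at hx ⊢
  rwa [mul_sub_one_mem_Ico_mul_iff hb0, hstep, hstep, sub_add_cancel]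

/-- For `0 < b < 1`, `x* = 1/(b-1)`, `x₀ > x*`, and `x_k = b^(-k)(x₀ - x*) + x*`
for `k ∈ ℤ`, with `I_k = [b x_k, b x_{k+1})`: if `x ∈ I_k` then `b(x-1) ∈ I_{k-1}`. -/
theorem stmt_2 (b x₀ : ℝ) (hb0 : 0 < b) (hb1 : b < 1)
    (xs : ℝ) (hxs : xs = 1 / (b - 1)) (hx₀ : x₀ > xs)
    (X : ℤ → ℝ) (hX : ∀ k : ℤ, X k = b ^ (-k) * (x₀ - xs) + xs)
    (I : ℤ → Set ℝ) (hI : ∀ k : ℤ, I k = Set.Ico (b * X k) (b * X (k + 1))) :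
    ∀ k : ℤ, ∀ x : ℝ, x ∈ I k → b * (x - 1) ∈ I (k - 1) :=
  stmt_2_general b x₀ hb0 hb1 xs hxs X hX I hI
end

section
/- Let 0 < b < 1, x* = 1/(b-1), and x₀ > x*. For every function y₀ : ℝ → ℝ there exists a function y : ℝ → ℝ such that y(x+1) = y(bx) for all x > x* and y(x) = y₀(x) for all x in the interval [b·x₀, x₀ + 1); moreover, any two functions satisfying these two conditions agree at every point of the open interval (b/(b-1), ∞). -/
/-!
Put `p = b/(b-1)`, so that `x* + 1 = b x* = p`. Writing `x = x* + t`, the equation reads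
`y (p + t) = y (p + b t)` for `t > 0`: the function `t ↦ y (p + t)` is invariant under
`t ↦ b t` on `(0, ∞)`. Shifted by `p`, the initial interval becomes `[b c, c)` with
`c = x₀ + 1 - p > 0`, and each orbit `{bⁿ t | n ∈ ℤ}` of a `t > 0` meets it in exactly one
point `s`. So every solution satisfies `y (p + t) = y₀ (p + s)`, and this formula defines one.
-/

open Set

section MulInvariant

variable {b c t : ℝ}

theorem le_of_zpow_mul_mem_Ico (hb0 : 0 < b) (hb1 : b < 1) (ht : 0 < t) {m n : ℤ}
    (hm : b ^ m * t ∈ Ico (b * c) c) (hn : b ^ n * t ∈ Ico (b * c) c) : m ≤ n := by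
  by_contra! hlt
  have hle : b ^ m * t ≤ b * (b ^ n * t) := by
    rw [← mul_assoc, ← zpow_one_add₀ hb0.ne']
    exact mul_le_mul_of_nonneg_right (zpow_le_zpow_right_of_le_one₀ hb0 hb1.le (by omega)) ht.le
  linarith [hm.1, mul_lt_mul_of_pos_left hn.2 hb0]

theorem existsUnique_zpow_mul_mem_Ico (hb0 : 0 < b) (hb1 : b < 1) (hc : 0 < c) (ht : 0 < t) :
    ∃! n : ℤ, b ^ n * t ∈ Ico (b * c) c := by
  obtain ⟨k, hk₁, hk₂⟩ := exists_mem_Ico_zpow (div_pos ht hc) (one_lt_inv_iff₀.2 ⟨hb0, hb1⟩)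
  rw [inv_zpow', zpow_neg] at hk₁ hk₂
  rw [zpow_add_one₀ hb0.ne'] at hk₂
  have hk_le : c ≤ b ^ k * t := by field_simp at hk₁; linarith
  have hk_lt : b ^ k * t * b < c := by field_simp at hk₂; linarith
  have hmem : b ^ (k + 1) * t ∈ Ico (b * c) c := by
    rw [zpow_add_one₀ hb0.ne']
    constructor <;> nlinarith
  exact ⟨k + 1, hmem, fun m hm => (le_of_zpow_mul_mem_Ico hb0 hb1 ht hm hmem).antisymm
    (le_of_zpow_mul_mem_Ico hb0 hb1 ht hmem hm)⟩

noncomputable def orbitRep (b c t : ℝ) : ℝ :=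
  b ^ (Classical.epsilon fun n : ℤ => b ^ n * t ∈ Ico (b * c) c) * t

theorem exists_orbitRep_eq_zpow_mul (b c t : ℝ) : ∃ n : ℤ, orbitRep b c t = b ^ n * t :=
  ⟨_, rfl⟩

theorem orbitRep_mem_Ico (hb0 : 0 < b) (hb1 : b < 1) (hc : 0 < c) (ht : 0 < t) :
    orbitRep b c t ∈ Ico (b * c) c :=
  Classical.epsilon_spec (existsUnique_zpow_mul_mem_Ico hb0 hb1 hc ht).exists

theorem orbitRep_eq_of_zpow_mul_mem_Ico (hb0 : 0 < b) (hb1 : b < 1) (ht : 0 < t) {n : ℤ}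
    (hn : b ^ n * t ∈ Ico (b * c) c) : orbitRep b c t = b ^ n * t := by
  have hε : orbitRep b c t ∈ Ico (b * c) c :=
    Classical.epsilon_spec (p := fun n : ℤ => b ^ n * t ∈ Ico (b * c) c) ⟨n, hn⟩
  rw [orbitRep, (le_of_zpow_mul_mem_Ico hb0 hb1 ht hε hn).antisymm
    (le_of_zpow_mul_mem_Ico hb0 hb1 ht hn hε)]

theorem orbitRep_of_mem_Ico (hb0 : 0 < b) (hb1 : b < 1) (ht : 0 < t) (h : t ∈ Ico (b * c) c) :
    orbitRep b c t = t := by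
  simpa using orbitRep_eq_of_zpow_mul_mem_Ico (n := 0) hb0 hb1 ht (by simpa using h)

theorem orbitRep_mul_left (hb0 : 0 < b) (hb1 : b < 1) (hc : 0 < c) (ht : 0 < t) :
    orbitRep b c (b * t) = orbitRep b c t := by
  obtain ⟨n, hn⟩ := exists_orbitRep_eq_zpow_mul b c t
  have hmem := orbitRep_mem_Ico hb0 hb1 hc ht
  have hshift : b ^ (n - 1) * (b * t) = b ^ n * t := by
    rw [← mul_assoc, ← zpow_add_one₀ hb0.ne', sub_add_cancel]
  rw [hn] at hmem ⊢
  rw [orbitRep_eq_of_zpow_mul_mem_Ico hb0 hb1 (mul_pos hb0 ht) (hshift ▸ hmem), hshift]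

theorem apply_zpow_mul_eq {f : ℝ → ℝ} (hb0 : 0 < b) (hf : ∀ t > 0, f (b * t) = f t) (n : ℤ)
    (ht : 0 < t) : f (b ^ n * t) = f t := by
  induction n using Int.induction_on with
  | zero => simp
  | succ n ih => rw [zpow_add_one₀ hb0.ne', mul_comm _ b, mul_assoc, hf _ (by positivity), ih]
  | pred n ih =>
    rw [← ih, ← hf _ (by positivity), ← mul_assoc, ← zpow_one_add₀ hb0.ne', add_sub_cancel]

theorem apply_orbitRep {f : ℝ → ℝ} (hb0 : 0 < b) (hf : ∀ t > 0, f (b * t) = f t) (ht : 0 < t) :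
    f (orbitRep b c t) = f t :=
  apply_zpow_mul_eq hb0 hf _ ht

theorem exists_mul_invariant_extension (hb0 : 0 < b) (hb1 : b < 1) (hc : 0 < c) (f₀ : ℝ → ℝ) :
    ∃ f : ℝ → ℝ, (∀ t > 0, f (b * t) = f t) ∧ ∀ t ∈ Ico (b * c) c, f t = f₀ t := by
  refine ⟨fun t => f₀ (orbitRep b c t), fun t ht => ?_, fun t ht => ?_⟩
  · exact congrArg f₀ (orbitRep_mul_left hb0 hb1 hc ht)
  · exact congrArg f₀ (orbitRep_of_mem_Ico hb0 hb1 (by nlinarith [ht.1]) ht)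

theorem eqOn_Ioi_of_mul_invariant {f g : ℝ → ℝ} (hb0 : 0 < b) (hb1 : b < 1) (hc : 0 < c)
    (hf : ∀ t > 0, f (b * t) = f t) (hg : ∀ t > 0, g (b * t) = g t)
    (hfg : EqOn f g (Ico (b * c) c)) : EqOn f g (Ioi 0) := fun t ht => by
  rw [← apply_orbitRep hb0 hf ht, ← apply_orbitRep hb0 hg ht,
    hfg (orbitRep_mem_Ico hb0 hb1 hc ht)]

end MulInvariant

theorem forall_add_one_eq_mul_iff {b xs p : ℝ} (hp : xs + 1 = p) (hbp : b * xs = p) (y : ℝ → ℝ) :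
    (∀ x > xs, y (x + 1) = y (b * x)) ↔ ∀ t > 0, y (p + b * t) = y (p + t) := by
  constructor
  · intro h t ht
    have := h (xs + t) (lt_add_of_pos_right _ ht)
    rwa [add_right_comm, hp, mul_add, hbp, eq_comm] at this
  · intro h x hx
    obtain ⟨t, rfl⟩ : ∃ t, x = xs + t := ⟨x - xs, by ring⟩
    rw [add_right_comm, hp, mul_add, hbp]
    exact (h t (by linarith)).symm

/-- For `0 < b < 1`, `x* = 1/(b-1)`, `x₀ > x*`: for any initial function `y₀`,
there is a solution `y` of `y(x+1) = y(bx)` (for `x > x*`) agreeing with `y₀` on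
`[b x₀, x₀ + 1)`, and any two such solutions agree on `(b/(b-1), ∞)`. -/
theorem stmt_4 (b x₀ : ℝ) (hb0 : 0 < b) (hb1 : b < 1) (hx₀ : x₀ > 1 / (b - 1)) :
    ∀ y₀ : ℝ → ℝ,
      (∃ y : ℝ → ℝ,
        (∀ x : ℝ, x > 1 / (b - 1) → y (x + 1) = y (b * x)) ∧
        (∀ x ∈ Set.Ico (b * x₀) (x₀ + 1), y x = y₀ x)) ∧
      (∀ y z : ℝ → ℝ,
        ((∀ x : ℝ, x > 1 / (b - 1) → y (x + 1) = y (b * x)) ∧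
          (∀ x ∈ Set.Ico (b * x₀) (x₀ + 1), y x = y₀ x)) →
        ((∀ x : ℝ, x > 1 / (b - 1) → z (x + 1) = z (b * x)) ∧
          (∀ x ∈ Set.Ico (b * x₀) (x₀ + 1), z x = y₀ x)) →
        ∀ x ∈ Set.Ioi (b / (b - 1)), y x = z x) := by
  intro y₀
  have hp : 1 / (b - 1) + 1 = b / (b - 1) := by
    field_simp [sub_ne_zero.2 hb1.ne]
    ring
  have hbp : b * (1 / (b - 1)) = b / (b - 1) := mul_one_div b _
  generalize 1 / (b - 1) = xs at hx₀ hp hbp ⊢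
  generalize b / (b - 1) = p at hp hbp ⊢
  obtain ⟨c, hc_def⟩ : ∃ c, c = x₀ + 1 - p := ⟨_, rfl⟩
  have hc : 0 < c := by linarith
  have hIco : ∀ x, x ∈ Ico (b * x₀) (x₀ + 1) ↔ x - p ∈ Ico (b * c) c := by
    have hbc : b * c = b * x₀ - p := by linear_combination b * hc_def + b * hp - hbp
    intro x
    simp only [mem_Ico]
    constructor <;> rintro ⟨h₁, h₂⟩ <;> constructor <;> linarith
  refine ⟨?_, fun y z hy hz x hx => ?_⟩
  · obtain ⟨f, hf, hf₀⟩ := exists_mul_invariant_extension hb0 hb1 hc (fun t => y₀ (p + t))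
    refine ⟨fun x => f (x - p),
      (forall_add_one_eq_mul_iff hp hbp fun x => f (x - p)).2 fun t ht => ?_, fun x hx => ?_⟩
    · simpa using hf t ht
    · simpa using hf₀ _ ((hIco x).1 hx)
  · have hyz := eqOn_Ioi_of_mul_invariant (f := fun t => y (p + t)) (g := fun t => z (p + t))
      hb0 hb1 hc ((forall_add_one_eq_mul_iff hp hbp y).1 hy.1)
      ((forall_add_one_eq_mul_iff hp hbp z).1 hz.1)
      (fun t ht => ?_) (mem_Ioi.2 (sub_pos.2 hx))
    · simpa using hyz
    · have hpt : p + t ∈ Ico (b * x₀) (x₀ + 1) := (hIco _).2 (by rwa [add_sub_cancel_left])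
      exact (hy.2 _ hpt).trans (hz.2 _ hpt).symm
end

section
/- Let -1 < b < 0, x* = 1/(b-1), c = b/(b-1), and let ε > 0. Set I₀ = (c - ε, c - |b|ε] ∪ [c + |b|ε, c + ε). For every function y₀ : ℝ → ℝ there exists a function y : ℝ → ℝ such that y(x+1) = y(bx) for all x ≠ x* and y(x) = y₀(x) for all x ∈ I₀; moreover, any two functions satisfying these two conditions agree at every point of ℝ \ {c}. -/
/-!
Put `t = x - c`. Since `b c - b = c`, the equation `y (x + 1) = y (b x)` says exactly that
`t ↦ y (c + t)` is invariant under `t ↦ b t` (at `x = x*` both sides are `y c`), and `I₀ - c` is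
the annulus `|b| ε ≤ |t| < ε`. As `0 < |b| < 1`, every `t ≠ 0` has exactly one multiple `b ^ n t`,
`n : ℤ`, in that annulus, so the annulus is a fundamental domain of `t ↦ b t` on `ℝ \ {0}`:
invariant functions are determined off `0` by their values on it, and any values there extend.
-/

open Set

theorem zpow_mul_mem_Ico_le {K : Type*} [Field K] [LinearOrder K] [IsStrictOrderedRing K]
    {r s ε : K} (hr0 : 0 < r) (hr1 : r < 1) (hs : 0 < s) {m n : ℤ}
    (hm : r ^ m * s ∈ Ico (r * ε) ε) (hn : r ^ n * s ∈ Ico (r * ε) ε) : m ≤ n := by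
  by_contra! hlt
  have hpow : r ^ m ≤ r ^ (n + 1) := zpow_le_zpow_right_of_le_one₀ hr0 hr1.le (by omega)
  have : r ^ m * s < r * ε :=
    calc r ^ m * s ≤ r ^ (n + 1) * s := mul_le_mul_of_nonneg_right hpow hs.le
      _ = r * (r ^ n * s) := by rw [zpow_add_one₀ hr0.ne']; ring
      _ < r * ε := mul_lt_mul_of_pos_left hn.2 hr0
  exact this.not_ge hm.1

theorem existsUnique_zpow_mul_mem_Ico_s6 {K : Type*} [Field K] [LinearOrder K]
    [IsStrictOrderedRing K] [Archimedean K] {r s ε : K} (hr0 : 0 < r) (hr1 : r < 1) (hs : 0 < s)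
    (hε : 0 < ε) : ∃! n : ℤ, r ^ n * s ∈ Ico (r * ε) ε := by
  obtain ⟨m, hm_le, hm_lt⟩ := exists_mem_Ico_zpow (div_pos hs hε) ((one_lt_inv₀ hr0).2 hr1)
  rw [inv_zpow, inv_le_comm₀ (zpow_pos hr0 _) (div_pos hs hε), inv_div, div_le_iff₀ hs] at hm_le
  rw [inv_zpow, lt_inv_comm₀ (div_pos hs hε) (zpow_pos hr0 _), inv_div, lt_div_iff₀ hs,
    zpow_add_one₀ hr0.ne', mul_comm _ r, mul_assoc] at hm_lt
  have hmem : r ^ (m + 1) * s ∈ Ico (r * ε) ε := by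
    rw [zpow_add_one₀ hr0.ne', mul_comm _ r, mul_assoc]
    exact ⟨mul_le_mul_of_nonneg_left hm_le hr0.le, hm_lt⟩
  exact ⟨m + 1, hmem, fun n hn =>
    le_antisymm (zpow_mul_mem_Ico_le hr0 hr1 hs hn hmem) (zpow_mul_mem_Ico_le hr0 hr1 hs hmem hn)⟩

theorem apply_zpow_mul_of_apply_mul {G₀ β : Type*} [GroupWithZero G₀] {a : G₀} (ha : a ≠ 0)
    {f : G₀ → β} (hf : ∀ t, f (a * t) = f t) (n : ℤ) (t : G₀) : f (a ^ n * t) = f t := by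
  induction n using Int.induction_on with
  | zero => rw [zpow_zero, one_mul]
  | succ n ih => rw [add_comm, zpow_one_add₀ ha, mul_assoc, hf, ih]
  | pred n ih => rw [← ih, ← hf, ← mul_assoc, ← zpow_one_add₀ ha, add_sub_cancel]

section FundamentalAnnulus

variable {𝕜 β : Type*} [NormedField 𝕜] {a t : 𝕜} {ε : ℝ}

def fundamentalAnnulus (a : 𝕜) (ε : ℝ) : Set 𝕜 := {t | ‖t‖ ∈ Ico (‖a‖ * ε) ε}

theorem ne_zero_of_mem_fundamentalAnnulus (ha : a ≠ 0) (ht : t ∈ fundamentalAnnulus a ε) :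
    t ≠ 0 := by
  rintro rfl
  obtain ⟨h₁, h₂⟩ := ht
  rw [norm_zero] at h₁ h₂
  exact (mul_pos (norm_pos_iff.2 ha) h₂).not_ge h₁

theorem existsUnique_zpow_mul_mem_fundamentalAnnulus (ha0 : a ≠ 0) (ha1 : ‖a‖ < 1) (hε : 0 < ε)
    (ht : t ≠ 0) : ∃! n : ℤ, a ^ n * t ∈ fundamentalAnnulus a ε := by
  simpa only [fundamentalAnnulus, mem_ofPred_eq, norm_mul, norm_zpow] using
    existsUnique_zpow_mul_mem_Ico_s6 (norm_pos_iff.2 ha0) ha1 (norm_pos_iff.2 ht) hε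

theorem eq_of_mul_invariant_of_eqOn_fundamentalAnnulus (ha0 : a ≠ 0) (ha1 : ‖a‖ < 1)
    (hε : 0 < ε) {f g : 𝕜 → β}
    (hf : ∀ t, f (a * t) = f t) (hg : ∀ t, g (a * t) = g t)
    (hfg : EqOn f g (fundamentalAnnulus a ε)) (ht : t ≠ 0) : f t = g t := by
  obtain ⟨n, hn, -⟩ := existsUnique_zpow_mul_mem_fundamentalAnnulus ha0 ha1 hε ht
  rw [← apply_zpow_mul_of_apply_mul ha0 hf n, ← apply_zpow_mul_of_apply_mul ha0 hg n, hfg hn]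

noncomputable def annulusIndex (a : 𝕜) (ε : ℝ) (t : 𝕜) : ℤ :=
  Classical.epsilon fun n : ℤ => a ^ n * t ∈ fundamentalAnnulus a ε

theorem zpow_annulusIndex_mul_mem (ha0 : a ≠ 0) (ha1 : ‖a‖ < 1) (hε : 0 < ε) (ht : t ≠ 0) :
    a ^ annulusIndex a ε t * t ∈ fundamentalAnnulus a ε :=
  Classical.epsilon_spec (existsUnique_zpow_mul_mem_fundamentalAnnulus ha0 ha1 hε ht).exists

theorem annulusIndex_eq (ha0 : a ≠ 0) (ha1 : ‖a‖ < 1) (hε : 0 < ε) {n : ℤ}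
    (hn : a ^ n * t ∈ fundamentalAnnulus a ε) : annulusIndex a ε t = n :=
  have ht : t ≠ 0 := right_ne_zero_of_mul (ne_zero_of_mem_fundamentalAnnulus ha0 hn)
  (existsUnique_zpow_mul_mem_fundamentalAnnulus ha0 ha1 hε ht).unique
    (zpow_annulusIndex_mul_mem ha0 ha1 hε ht) hn

noncomputable def annulusExtension (a : 𝕜) (ε : ℝ) (g₀ : 𝕜 → β) (t : 𝕜) : β :=
  g₀ (a ^ annulusIndex a ε t * t)

theorem annulusExtension_mul (ha0 : a ≠ 0) (ha1 : ‖a‖ < 1) (hε : 0 < ε) (g₀ : 𝕜 → β) (t : 𝕜) :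
    annulusExtension a ε g₀ (a * t) = annulusExtension a ε g₀ t := by
  rcases eq_or_ne t 0 with rfl | ht
  · rw [mul_zero]
  have hidx : annulusIndex a ε (a * t) = annulusIndex a ε t - 1 := by
    apply annulusIndex_eq ha0 ha1 hε
    rw [← mul_assoc, ← zpow_add_one₀ ha0, sub_add_cancel]
    exact zpow_annulusIndex_mul_mem ha0 ha1 hε ht
  rw [annulusExtension, annulusExtension, hidx, ← mul_assoc, ← zpow_add_one₀ ha0, sub_add_cancel]

theorem annulusExtension_eqOn (ha0 : a ≠ 0) (ha1 : ‖a‖ < 1) (hε : 0 < ε) (g₀ : 𝕜 → β) :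
    EqOn (annulusExtension a ε g₀) g₀ (fundamentalAnnulus a ε) := by
  intro t ht
  rw [annulusExtension, annulusIndex_eq ha0 ha1 hε (n := 0) (by rwa [zpow_zero, one_mul]),
    zpow_zero, one_mul]

end FundamentalAnnulus

theorem mem_Ioc_union_Ico_iff_abs_sub_mem_Ico {K : Type*} [Field K] [LinearOrder K]
    [IsStrictOrderedRing K] {c δ ε x : K} (hδ : 0 ≤ δ) :
    x ∈ Ioc (c - ε) (c - δ) ∪ Ico (c + δ) (c + ε) ↔ |x - c| ∈ Ico δ ε := by
  simp only [mem_union, mem_Ioc, mem_Ico]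
  rcases le_or_gt c x with hx | hx
  · rw [abs_of_nonneg (sub_nonneg.2 hx)]
    constructor
    · rintro (⟨h₁, h₂⟩ | ⟨h₁, h₂⟩) <;> constructor <;> linarith
    · rintro ⟨h₁, h₂⟩
      exact Or.inr ⟨by linarith, by linarith⟩
  · rw [abs_of_neg (sub_neg.2 hx)]
    constructor
    · rintro (⟨h₁, h₂⟩ | ⟨h₁, h₂⟩) <;> constructor <;> linarith
    · rintro ⟨h₁, h₂⟩
      exact Or.inl ⟨by linarith, by linarith⟩

theorem apply_add_one_eq_apply_mul_iff {K β : Type*} [Field K] {b c xs : K} (hb : b ≠ 1)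
    (hxs : xs = 1 / (b - 1)) (hc : c = b / (b - 1)) {y : K → β} :
    (∀ x, x ≠ xs → y (x + 1) = y (b * x)) ↔ ∀ t, y (c + b * t) = y (c + t) := by
  have hb1 : b - 1 ≠ 0 := sub_ne_zero.2 hb
  have hxs' : xs = c - 1 := by rw [hxs, hc]; field_simp; ring
  have hbc : ∀ t, b * (c + t - 1) = c + b * t := by intro t; rw [hc]; field_simp; ring
  constructor
  · intro h t
    rcases eq_or_ne t 0 with rfl | ht
    · rw [mul_zero]
    have := h (c + t - 1) (by rw [hxs']; contrapose! ht; linear_combination ht)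
    rwa [sub_add_cancel, hbc, eq_comm] at this
  · intro h x _
    have := h (x + 1 - c)
    rwa [add_sub_cancel, ← hbc, add_sub_cancel, add_sub_cancel_right, eq_comm] at this

/-- For `-1 < b < 0`, `x* = 1/(b-1)`, `c = b/(b-1)`, `ε > 0`, and
`I₀ = (c - ε, c - |b|ε] ∪ [c + |b|ε, c + ε)`: for any initial function `y₀` there is a
solution `y` of `y(x+1) = y(bx)` (for all `x ≠ x*`) agreeing with `y₀` on `I₀`, and any
two such solutions agree on `ℝ \ {c}`. -/
theorem stmt_6 (b ε : ℝ) (hb0 : -1 < b) (hb1 : b < 0) (hε : 0 < ε)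
    (xs c : ℝ) (hxs : xs = 1 / (b - 1)) (hc : c = b / (b - 1))
    (I₀ : Set ℝ)
    (hI₀ : I₀ = Set.Ioc (c - ε) (c - |b| * ε) ∪ Set.Ico (c + |b| * ε) (c + ε)) :
    ∀ y₀ : ℝ → ℝ,
      (∃ y : ℝ → ℝ,
        (∀ x : ℝ, x ≠ xs → y (x + 1) = y (b * x)) ∧
        (∀ x ∈ I₀, y x = y₀ x)) ∧
      (∀ y z : ℝ → ℝ,
        ((∀ x : ℝ, x ≠ xs → y (x + 1) = y (b * x)) ∧ (∀ x ∈ I₀, y x = y₀ x)) →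
        ((∀ x : ℝ, x ≠ xs → z (x + 1) = z (b * x)) ∧ (∀ x ∈ I₀, z x = y₀ x)) →
        ∀ x : ℝ, x ≠ c → y x = z x) := by
  have hb0' : b ≠ 0 := hb1.ne
  have hb1' : ‖b‖ < 1 := by rw [Real.norm_eq_abs, abs_lt]; constructor <;> linarith
  have hfe {y : ℝ → ℝ} := apply_add_one_eq_apply_mul_iff (y := y) (by linarith) hxs hc
  have hmem : ∀ x, x ∈ I₀ ↔ x - c ∈ fundamentalAnnulus b ε := fun x => by
    rw [hI₀, mem_Ioc_union_Ico_iff_abs_sub_mem_Ico (by positivity), fundamentalAnnulus,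
      mem_ofPred_eq, Real.norm_eq_abs, Real.norm_eq_abs]
  intro y₀
  set g := annulusExtension b ε fun t => y₀ (c + t)
  refine ⟨⟨fun x => g (x - c), (hfe (y := fun x => g (x - c))).2 fun t => ?_, fun x hx => ?_⟩, ?_⟩
  · simp only [add_sub_cancel_left, g, annulusExtension_mul hb0' hb1' hε]
  · simp only [g, annulusExtension_eqOn hb0' hb1' hε _ ((hmem x).1 hx), add_sub_cancel]
  · rintro y z ⟨hy, hyI⟩ ⟨hz, hzI⟩ x hx
    have hyz : EqOn (fun t => y (c + t)) (fun t => z (c + t)) (fundamentalAnnulus b ε) :=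
      fun t ht => by
        dsimp only
        rw [hyI, hzI] <;> rwa [hmem, add_sub_cancel_left]
    simpa only [add_sub_cancel] using eq_of_mul_invariant_of_eqOn_fundamentalAnnulus hb0' hb1' hε
      (hfe.1 hy) (hfe.1 hz) hyz (sub_ne_zero.2 hx)
end

section
/- Let ε > 0 and δ > 0. For every function f : ℝ → ℝ there exists a function y : ℝ → ℝ such that y(x) = y(2x) for all x ≠ 0 and y(x) = f(x) for all x in the set I₀ = (-2δ, -δ] ∪ [ε, 2ε); moreover, any two functions satisfying these two conditions agree at every point of ℝ \ {0}. -/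
/-!
Every solution of `y x = y (2 * x)` is constant on the orbits `{2 ^ n * x | n : ℤ}` of the
nonzero reals, and `I₀` meets each such orbit in exactly one point `2 ^ n * x`: for `x > 0`, `n` is
the unique integer with `2 ^ n * x ∈ [ε, 2ε)`, for `x < 0` the one with `2 ^ n * (-x) ∈ [δ, 2δ)`.
Hence a solution is determined off `0` by its values on `I₀`, and `f` composed with the map sending
`x` to the point of its orbit in `I₀` is a solution extending `f`.
-/

open Set

namespace ScalingEquation

variable {G₀ β : Type*} [GroupWithZero G₀] {a x : G₀} {D : Set G₀} {f y : G₀ → β}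

def IsSolution (a : G₀) (D : Set G₀) (f y : G₀ → β) : Prop :=
  (∀ x, x ≠ 0 → y x = y (a * x)) ∧ ∀ x ∈ D, y x = f x

def IsFundamentalDomain (a : G₀) (D : Set G₀) : Prop :=
  ∀ x, x ≠ 0 → ∃! n : ℤ, a ^ n * x ∈ D

open Classical in
noncomputable def orbitRep (a : G₀) (D : Set G₀) (x : G₀) : G₀ :=
  if h : ∃ n : ℤ, a ^ n * x ∈ D then a ^ h.choose * x else x

theorem apply_zpow_mul (hy : ∀ x, x ≠ 0 → y x = y (a * x)) (ha : a ≠ 0) (n : ℤ) (hx : x ≠ 0) :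
    y (a ^ n * x) = y x := by
  induction n using Int.induction_on with
  | zero => simp
  | succ n ih =>
    rw [add_comm, zpow_one_add₀ ha, mul_assoc, ← hy _ (mul_ne_zero (zpow_ne_zero n ha) hx), ih]
  | pred n ih =>
    have hne : a ^ (-(n : ℤ) - 1) * x ≠ 0 := mul_ne_zero (zpow_ne_zero _ ha) hx
    rw [hy _ hne, ← mul_assoc, ← zpow_one_add₀ ha, add_sub_cancel, ih]

theorem orbitRep_zero : orbitRep a D 0 = 0 := by
  unfold orbitRep
  split_ifs <;> simp

theorem orbitRep_eq (hD : IsFundamentalDomain a D) (hx : x ≠ 0) {n : ℤ} (hn : a ^ n * x ∈ D) :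
    orbitRep a D x = a ^ n * x := by
  have h : ∃ m : ℤ, a ^ m * x ∈ D := ⟨n, hn⟩
  rw [orbitRep, dif_pos h, (hD x hx).unique h.choose_spec hn]

theorem orbitRep_of_mem (hD : IsFundamentalDomain a D) (hx : x ∈ D) : orbitRep a D x = x := by
  rcases eq_or_ne x 0 with rfl | hx₀
  · exact orbitRep_zero
  · simpa using orbitRep_eq hD hx₀ (n := 0) (by simpa using hx)

theorem orbitRep_mul (hD : IsFundamentalDomain a D) (ha : a ≠ 0) (hx : x ≠ 0) :
    orbitRep a D (a * x) = orbitRep a D x := by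
  obtain ⟨m, hm, -⟩ := hD (a * x) (mul_ne_zero ha hx)
  have hshift : a ^ m * (a * x) = a ^ (m + 1) * x := by rw [zpow_add_one₀ ha, mul_assoc]
  rw [orbitRep_eq hD (mul_ne_zero ha hx) hm, hshift, orbitRep_eq hD hx (hshift ▸ hm)]

theorem isSolution_comp_orbitRep (hD : IsFundamentalDomain a D) (ha : a ≠ 0) (f : G₀ → β) :
    IsSolution a D f (f ∘ orbitRep a D) :=
  ⟨fun _ hx => by simp only [Function.comp_apply, orbitRep_mul hD ha hx],
    fun _ hx => by simp only [Function.comp_apply, orbitRep_of_mem hD hx]⟩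

theorem IsSolution.apply_eq (hy : IsSolution a D f y) (hD : IsFundamentalDomain a D) (ha : a ≠ 0)
    (hx : x ≠ 0) : y x = f (orbitRep a D x) := by
  obtain ⟨n, hn, -⟩ := hD x hx
  rw [orbitRep_eq hD hx hn, ← hy.2 _ hn, apply_zpow_mul hy.1 ha n hx]

end ScalingEquation

section Interval

variable {K : Type*} [Field K] [LinearOrder K] [IsStrictOrderedRing K] {a c t x ε δ : K}

theorem existsUnique_zpow_mem_Ico [Archimedean K] (ha : 1 < a) (ht : 0 < t) :
    ∃! k : ℤ, t ∈ Ico (a ^ k) (a ^ (k + 1)) := by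
  obtain ⟨k, hk⟩ := exists_mem_Ico_zpow ht ha
  refine ⟨k, hk, fun m hm => le_antisymm ?_ ?_⟩
  · have := (zpow_lt_zpow_iff_right₀ ha).1 (hm.1.trans_lt hk.2)
    omega
  · have := (zpow_lt_zpow_iff_right₀ ha).1 (hk.1.trans_lt hm.2)
    omega

theorem zpow_mul_mem_Ico_iff (ha : 0 < a) (hc : 0 < c) (n : ℤ) :
    a ^ n * x ∈ Ico c (a * c) ↔ x / c ∈ Ico (a ^ (-n)) (a ^ (-n + 1)) := by
  have han : 0 < a ^ n := zpow_pos ha n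
  simp only [mem_Ico, le_div_iff₀ hc, div_lt_iff₀ hc, zpow_add_one₀ ha.ne', zpow_neg, mul_assoc,
    inv_mul_le_iff₀ han, lt_inv_mul_iff₀ han]

theorem existsUnique_zpow_mul_mem_Ico_s13 [Archimedean K] (ha : 1 < a) (hc : 0 < c) (hx : 0 < x) :
    ∃! n : ℤ, a ^ n * x ∈ Ico c (a * c) :=
  ((Equiv.neg ℤ).existsUnique_congr (zpow_mul_mem_Ico_iff (zero_lt_one.trans ha) hc)).2
    (existsUnique_zpow_mem_Ico ha (div_pos hx hc))

theorem mem_Ioc_union_Ico_iff_of_pos (hδ : 0 < δ) (ht : 0 < t) :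
    t ∈ Ioc (-a * δ) (-δ) ∪ Ico ε (a * ε) ↔ t ∈ Ico ε (a * ε) :=
  or_iff_right fun h => by linarith [h.2]

theorem mem_Ioc_union_Ico_iff_of_neg (hε : 0 < ε) (ht : t < 0) :
    t ∈ Ioc (-a * δ) (-δ) ∪ Ico ε (a * ε) ↔ -t ∈ Ico δ (a * δ) := by
  rw [mem_union, or_iff_left fun h => by linarith [h.1], mem_Ioc, mem_Ico, neg_mul]
  constructor <;> rintro ⟨h₁, h₂⟩ <;> constructor <;> linarith

theorem isFundamentalDomain_Ioc_union_Ico [Archimedean K] (ha : 1 < a) (hε : 0 < ε)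
    (hδ : 0 < δ) : ScalingEquation.IsFundamentalDomain a (Ioc (-a * δ) (-δ) ∪ Ico ε (a * ε)) := by
  intro x hx
  have hpow (n : ℤ) : 0 < a ^ n := zpow_pos (zero_lt_one.trans ha) n
  rcases hx.lt_or_gt with hneg | hpos
  · refine (existsUnique_congr fun n => ?_).2 (existsUnique_zpow_mul_mem_Ico_s13 ha hδ (neg_pos.2 hneg))
    rw [mem_Ioc_union_Ico_iff_of_neg hε (mul_neg_of_pos_of_neg (hpow n) hneg), mul_neg]
  · refine (existsUnique_congr fun n => ?_).2 (existsUnique_zpow_mul_mem_Ico_s13 ha hε hpos)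
    exact mem_Ioc_union_Ico_iff_of_pos hδ (mul_pos (hpow n) hpos)

end Interval

/-- For `ε, δ > 0`, `I₀ = (-2δ, -δ] ∪ [ε, 2ε)`, and any initial function `f`,
there is a solution `y` of `y(x) = y(2x)` (for all `x ≠ 0`) agreeing with `f` on `I₀`,
and any two such solutions agree on `ℝ \ {0}`. -/
theorem stmt_13 (ε δ : ℝ) (hε : 0 < ε) (hδ : 0 < δ) :
    ∀ f : ℝ → ℝ,
      (∃ y : ℝ → ℝ,
        (∀ x : ℝ, x ≠ 0 → y x = y (2 * x)) ∧
        (∀ x ∈ Set.Ioc (-2 * δ) (-δ) ∪ Set.Ico ε (2 * ε), y x = f x)) ∧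
      (∀ y z : ℝ → ℝ,
        ((∀ x : ℝ, x ≠ 0 → y x = y (2 * x)) ∧
          (∀ x ∈ Set.Ioc (-2 * δ) (-δ) ∪ Set.Ico ε (2 * ε), y x = f x)) →
        ((∀ x : ℝ, x ≠ 0 → z x = z (2 * x)) ∧
          (∀ x ∈ Set.Ioc (-2 * δ) (-δ) ∪ Set.Ico ε (2 * ε), z x = f x)) →
        ∀ x : ℝ, x ≠ 0 → y x = z x) := by
  intro f
  have hD := isFundamentalDomain_Ioc_union_Ico one_lt_two hε hδ
  open ScalingEquation in
  exact ⟨⟨_, isSolution_comp_orbitRep hD two_ne_zero f⟩, fun y z hy hz x hx =>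
    (IsSolution.apply_eq hy hD two_ne_zero hx).trans (IsSolution.apply_eq hz hD two_ne_zero hx).symm⟩
end

section
/- Let ε > 0. For every function y₀ : ℝ → ℝ there exists a function y : ℝ → ℝ such that y(3x) = y(x) + y(2x) for all x ≥ 0 and y(x) = y₀(x) for all x in the interval [ε, 3ε); moreover, any two functions satisfying these two conditions agree at every point of the half-line [0, ∞). -/
/-!
Call `[ε, 3ε)` the band. Below the band the equation determines `y x = y (3x) - y (2x)` from
values at larger points, above it `y x = y (x/3) + y (2x/3)` from values at smaller points, and
both rewritings move `x` towards the band. Measuring the distance to the band by the least `n`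
with `ε ≤ 2ⁿ x` and `(2/3)ⁿ x < 3ε`, each rewriting strictly lowers it, so well-founded
recursion on this rank defines a solution from `y₀`, and induction on it shows that every solution
is that one on `[0, ∞)`.
-/

open Set

namespace ScalingEquation

variable {G : Type*} [AddGroup G] {ε x c : ℝ} {n : ℕ}

def SolvesScalingEq (y : ℝ → G) : Prop :=
  ∀ x : ℝ, x ≥ 0 → y (3 * x) = y x + y (2 * x)

namespace SolvesScalingEq

variable {y : ℝ → G}

theorem apply_zero (hy : SolvesScalingEq y) : y 0 = 0 := by
  simpa using hy 0 le_rfl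

theorem apply_eq_sub (hy : SolvesScalingEq y) (hx : 0 ≤ x) : y x = y (3 * x) - y (2 * x) := by
  rw [hy x hx, add_sub_cancel_right]

theorem apply_eq_add (hy : SolvesScalingEq y) (hx : 0 ≤ x) :
    y x = y (3⁻¹ * x) + y ((2 / 3) * x) := by
  convert hy (3⁻¹ * x) (by positivity) using 2 <;> ring_nf

end SolvesScalingEq

def ReachesBandIn (ε x : ℝ) (n : ℕ) : Prop :=
  ε ≤ 2 ^ n * x ∧ (2 / 3) ^ n * x < 3 * ε

theorem reachesBandIn_zero_iff : ReachesBandIn ε x 0 ↔ x ∈ Ico ε (3 * ε) := by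
  simp [ReachesBandIn]

theorem exists_reachesBandIn (hε : 0 < ε) (hx : 0 < x) : ∃ n, ReachesBandIn ε x n := by
  obtain ⟨k, hk⟩ := pow_unbounded_of_one_lt (ε / x) (by norm_num : (1 : ℝ) < 2)
  obtain ⟨m, hm⟩ := exists_pow_lt_of_lt_one (by positivity : 0 < 3 * ε / x)
    (by norm_num : (2 / 3 : ℝ) < 1)
  refine ⟨k + m, ?_, ?_⟩
  · calc ε ≤ 2 ^ k * x := ((div_lt_iff₀ hx).1 hk).le
      _ ≤ 2 ^ (k + m) * x := by gcongr <;> norm_num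
  · calc (2 / 3 : ℝ) ^ (k + m) * x ≤ (2 / 3) ^ m * x :=
          mul_le_mul_of_nonneg_right
            (pow_le_pow_of_le_one (by norm_num) (by norm_num) (Nat.le_add_left m k)) hx.le
      _ < 3 * ε := (lt_div_iff₀ hx).1 hm

theorem ReachesBandIn.mul_of_lt (h : ReachesBandIn ε x (n + 1)) (hx : 0 < x) (hxε : x < ε)
    (hc₂ : 2 ≤ c) (hc₃ : c ≤ 3) : ReachesBandIn ε (c * x) n := by
  have hpow : (2 / 3 : ℝ) ^ n ≤ 1 := pow_le_one₀ (by norm_num) (by norm_num)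
  constructor
  · calc ε ≤ 2 ^ (n + 1) * x := h.1
      _ = 2 ^ n * (2 * x) := by ring
      _ ≤ 2 ^ n * (c * x) := by gcongr
  · calc (2 / 3 : ℝ) ^ n * (c * x) ≤ 1 * (3 * x) := by gcongr
      _ < 3 * ε := by linarith

theorem ReachesBandIn.mul_of_ge (h : ReachesBandIn ε x (n + 1)) (hε : 0 < ε) (hx : 3 * ε ≤ x)
    (hc₁ : 3⁻¹ ≤ c) (hc₂ : c ≤ 2 / 3) : ReachesBandIn ε (c * x) n := by
  have hcx : ε ≤ c * x := by nlinarith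
  constructor
  · calc ε ≤ c * x := hcx
      _ ≤ 2 ^ n * (c * x) := le_mul_of_one_le_left (by linarith) (one_le_pow₀ (by norm_num))
  · calc (2 / 3 : ℝ) ^ n * (c * x) ≤ (2 / 3) ^ n * (2 / 3 * x) := by gcongr; linarith
      _ = (2 / 3) ^ (n + 1) * x := by ring
      _ < 3 * ε := h.2

noncomputable def bandRank (ε x : ℝ) : ℕ :=
  sInf {n | ReachesBandIn ε x n}

theorem reachesBandIn_bandRank (hε : 0 < ε) (hx : 0 < x) : ReachesBandIn ε x (bandRank ε x) :=
  Nat.sInf_mem (exists_reachesBandIn hε hx)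

theorem bandRank_le (h : ReachesBandIn ε x n) : bandRank ε x ≤ n :=
  Nat.sInf_le h

theorem bandRank_lt {x' : ℝ} (hε : 0 < ε) (hx : 0 < x) (hband : x ∉ Ico ε (3 * ε))
    (hstep : ∀ n, ReachesBandIn ε x (n + 1) → ReachesBandIn ε x' n) :
    bandRank ε x' < bandRank ε x := by
  have hreach := reachesBandIn_bandRank hε hx
  obtain ⟨n, hn⟩ : ∃ n, bandRank ε x = n + 1 :=
    Nat.exists_eq_add_one.2 <| Nat.pos_of_ne_zero fun h0 =>
      hband (reachesBandIn_zero_iff.1 (h0 ▸ hreach))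
  rw [hn] at hreach ⊢
  exact Nat.lt_succ_of_le (bandRank_le (hstep n hreach))

theorem bandRank_mul_lt_of_lt (hx : 0 < x) (hxε : x < ε) (hc₂ : 2 ≤ c) (hc₃ : c ≤ 3) :
    bandRank ε (c * x) < bandRank ε x :=
  bandRank_lt (hx.trans hxε) hx (fun h => hxε.not_ge h.1)
    fun _ h => h.mul_of_lt hx hxε hc₂ hc₃

theorem bandRank_mul_lt_of_ge (hε : 0 < ε) (hx : 3 * ε ≤ x) (hc₁ : 3⁻¹ ≤ c) (hc₂ : c ≤ 2 / 3) :
    bandRank ε (c * x) < bandRank ε x :=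
  bandRank_lt hε (by linarith) (fun h => hx.not_gt h.2)
    fun _ h => h.mul_of_ge hε hx hc₁ hc₂

noncomputable def extend (hε : 0 < ε) (y₀ : ℝ → G) (x : ℝ) : G :=
  if x ≤ 0 then 0
  else if x < ε then extend hε y₀ (3 * x) - extend hε y₀ (2 * x)
  else if x < 3 * ε then y₀ x
  else extend hε y₀ (3⁻¹ * x) + extend hε y₀ ((2 / 3) * x)
termination_by bandRank ε x
decreasing_by
  · exact bandRank_mul_lt_of_lt (by linarith) ‹_› (by norm_num) le_rfl
  · exact bandRank_mul_lt_of_lt (by linarith) ‹_› le_rfl (by norm_num)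
  · exact bandRank_mul_lt_of_ge hε (by linarith) le_rfl (by norm_num)
  · exact bandRank_mul_lt_of_ge hε (by linarith) (by norm_num) le_rfl

variable (hε : 0 < ε) (y₀ : ℝ → G)

theorem extend_of_nonpos (hx : x ≤ 0) : extend hε y₀ x = 0 := by
  rw [extend, if_pos hx]

theorem extend_of_lt (hx : 0 < x) (hxε : x < ε) :
    extend hε y₀ x = extend hε y₀ (3 * x) - extend hε y₀ (2 * x) := by
  rw [extend, if_neg hx.not_ge, if_pos hxε]

theorem extend_of_mem_band (hx : x ∈ Ico ε (3 * ε)) : extend hε y₀ x = y₀ x := by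
  rw [extend, if_neg (by linarith [hx.1]), if_neg hx.1.not_gt, if_pos hx.2]

theorem extend_of_ge (hx : 3 * ε ≤ x) :
    extend hε y₀ x = extend hε y₀ (3⁻¹ * x) + extend hε y₀ ((2 / 3) * x) := by
  rw [extend, if_neg (by linarith), if_neg (by linarith), if_neg hx.not_gt]

theorem solvesScalingEq_extend : SolvesScalingEq (extend hε y₀) := by
  intro x hx
  rcases hx.eq_or_lt with rfl | hx
  · simp [extend_of_nonpos]
  rcases lt_or_ge x ε with hxε | hεx
  · rw [extend_of_lt hε y₀ hx hxε, sub_add_cancel]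
  · rw [extend_of_ge hε y₀ (by linarith), ← mul_assoc, ← mul_assoc]
    norm_num

variable {y₀} in
theorem SolvesScalingEq.eqOn_extend {y : ℝ → G} (hy : SolvesScalingEq y)
    (hy₀ : EqOn y y₀ (Ico ε (3 * ε))) : EqOn y (extend hε y₀) (Ici 0) := by
  intro x hx
  induction hr : bandRank ε x using Nat.strong_induction_on generalizing x with
  | _ n ih =>
  have ih' {x'} (hx' : 0 ≤ x') (hlt : bandRank ε x' < bandRank ε x) : y x' = extend hε y₀ x' :=
    ih _ (hr ▸ hlt) hx' rfl
  rcases (mem_Ici.1 hx).eq_or_lt with rfl | hx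
  · rw [hy.apply_zero, extend_of_nonpos hε y₀ le_rfl]
  rcases lt_or_ge x ε with hxε | hεx
  · rw [hy.apply_eq_sub hx.le, extend_of_lt hε y₀ hx hxε,
      ih' (by positivity) (bandRank_mul_lt_of_lt hx hxε (by norm_num) le_rfl),
      ih' (by positivity) (bandRank_mul_lt_of_lt hx hxε le_rfl (by norm_num))]
  rcases lt_or_ge x (3 * ε) with hx3ε | hx3ε
  · rw [hy₀ ⟨hεx, hx3ε⟩, extend_of_mem_band hε y₀ ⟨hεx, hx3ε⟩]
  · rw [hy.apply_eq_add hx.le, extend_of_ge hε y₀ hx3ε,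
      ih' (by positivity) (bandRank_mul_lt_of_ge hε hx3ε le_rfl (by norm_num)),
      ih' (by positivity) (bandRank_mul_lt_of_ge hε hx3ε (by norm_num) le_rfl)]

end ScalingEquation

open ScalingEquation in
/-- For `ε > 0` and any initial function `y₀`, there is a solution `y` of
`y(3x) = y(x) + y(2x)` (for all `x ≥ 0`) agreeing with `y₀` on `[ε, 3ε)`, and any two such
solutions agree on `[0, ∞)`. -/
theorem stmt_18 (ε : ℝ) (hε : 0 < ε) :
    ∀ y₀ : ℝ → ℝ,
      (∃ y : ℝ → ℝ,
        (∀ x : ℝ, x ≥ 0 → y (3 * x) = y x + y (2 * x)) ∧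
        (∀ x ∈ Set.Ico ε (3 * ε), y x = y₀ x)) ∧
      (∀ y z : ℝ → ℝ,
        ((∀ x : ℝ, x ≥ 0 → y (3 * x) = y x + y (2 * x)) ∧
          (∀ x ∈ Set.Ico ε (3 * ε), y x = y₀ x)) →
        ((∀ x : ℝ, x ≥ 0 → z (3 * x) = z x + z (2 * x)) ∧
          (∀ x ∈ Set.Ico ε (3 * ε), z x = y₀ x)) →
        ∀ x ∈ Set.Ici (0 : ℝ), y x = z x) := fun y₀ =>
  ⟨⟨extend hε y₀, solvesScalingEq_extend hε y₀, fun _ hx => extend_of_mem_band hε y₀ hx⟩,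
    fun _ _ hy hz =>
      (SolvesScalingEq.eqOn_extend hε hy.1 hy.2).trans
        (SolvesScalingEq.eqOn_extend hε hz.1 hz.2).symm⟩
end

section
/- Let b ∈ ℝ with b ≠ 0, b ≠ 1, b ≠ -1, and set c = b/(b-1). Suppose y : ℝ → ℝ satisfies y(x+1) = y(bx) for all x ∈ ℝ. Then for every x ∈ ℝ and every n ∈ ℕ one has y(bⁿ(x - c) + c) = y(x) and y(b⁻ⁿ(x - c) + c) = y(x). Moreover, for every x ≠ c: if |b| < 1 the points bⁿ(x - c) + c, n ∈ ℕ, are pairwise distinct and converge to c as n → ∞, while if |b| > 1 the points b⁻ⁿ(x - c) + c, n ∈ ℕ, are pairwise distinct and converge to c as n → ∞. -/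
/-!
Since `c (b - 1) = b`, substituting `x = u - 1` turns the equation into `y (b (u - c) + c) = y u`:
`y` is invariant under the homothety of ratio `b` centred at `c`, hence under all its integer
powers `u ↦ bⁿ (u - c) + c`. For `|r| < 1` the orbit `rⁿ (x - c) + c` of a point `x ≠ c` is
injective in `n` (its distances to `c` are `|r|ⁿ |x - c|`) and converges to the centre `c`; for
`|b| > 1` apply this to `r = b⁻¹`.
-/

open Filter Topology

section Homothety

variable {K β : Type*} [Field K] (y : K → β) {a c : K}

theorem comp_homothety_eq_of_add_one {b : K} (hc : c * (b - 1) = b)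
    (hy : ∀ x, y (x + 1) = y (b * x)) (u : K) : y (b * (u - c) + c) = y u := by
  have hx : b * (u - c) + c = b * (u - 1) := by linear_combination -hc
  rw [hx, ← hy, sub_add_cancel]

theorem comp_homothety_zpow_eq (ha : a ≠ 0) (h : ∀ u, y (a * (u - c) + c) = y u)
    (n : ℤ) (u : K) : y (a ^ n * (u - c) + c) = y u := by
  have h_inv (v : K) : y (a⁻¹ * (v - c) + c) = y v := by
    rw [← h (a⁻¹ * (v - c) + c)]
    congr 1
    field_simp
    ring
  induction n using Int.induction_on with
  | zero => simp
  | succ n ih =>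
    rw [← ih, ← h (a ^ (n : ℤ) * (u - c) + c), zpow_add_one₀ ha]
    congr 1
    ring
  | pred n ih =>
    rw [← ih, ← h_inv (a ^ (-(n : ℤ)) * (u - c) + c), zpow_sub_one₀ ha]
    congr 1
    ring

end Homothety

section Contraction

variable {K : Type*} [NormedField K] {r : K}

theorem injective_pow_mul_add (hr0 : r ≠ 0) (hr1 : ‖r‖ < 1) {d : K} (hd : d ≠ 0) (c : K) :
    Function.Injective fun n : ℕ => r ^ n * d + c := by
  intro m n hmn
  have hpow : r ^ m = r ^ n := mul_right_cancel₀ hd (add_right_cancel hmn)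
  have hnorm : ‖r‖ ^ m = ‖r‖ ^ n := by rw [← norm_pow, ← norm_pow, hpow]
  exact pow_right_injective₀ (norm_pos_iff.mpr hr0) hr1.ne hnorm

theorem tendsto_pow_mul_add (hr1 : ‖r‖ < 1) (d c : K) :
    Tendsto (fun n : ℕ => r ^ n * d + c) atTop (𝓝 c) := by
  simpa using ((tendsto_pow_atTop_nhds_zero_of_norm_lt_one hr1).mul_const d).add_const c

end Contraction

theorem stmt_19_general (b : ℝ) (hb0 : b ≠ 0) (hb1 : b ≠ 1)
    (c : ℝ) (hc : c = b / (b - 1))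
    (y : ℝ → ℝ) (hy : ∀ x : ℝ, y (x + 1) = y (b * x)) :
    (∀ x : ℝ, ∀ n : ℕ, y (b ^ n * (x - c) + c) = y x) ∧
    (∀ x : ℝ, ∀ n : ℕ, y (b ^ (-(n : ℤ)) * (x - c) + c) = y x) ∧
    (∀ x : ℝ, x ≠ c →
      (|b| < 1 →
        Function.Injective (fun n : ℕ => b ^ n * (x - c) + c) ∧
        Filter.Tendsto (fun n : ℕ => b ^ n * (x - c) + c) Filter.atTop (nhds c)) ∧
      (|b| > 1 →
        Function.Injective (fun n : ℕ => b ^ (-(n : ℤ)) * (x - c) + c) ∧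
        Filter.Tendsto (fun n : ℕ => b ^ (-(n : ℤ)) * (x - c) + c) Filter.atTop (nhds c))) := by
  have hcb : c * (b - 1) = b := by rw [hc, div_mul_cancel₀ _ (sub_ne_zero.mpr hb1)]
  have h_orbit := comp_homothety_zpow_eq y hb0 (comp_homothety_eq_of_add_one y hcb hy)
  have hneg : ∀ n : ℕ, b ^ (-(n : ℤ)) = b⁻¹ ^ n := fun n => by rw [zpow_neg, zpow_natCast, inv_pow]
  refine ⟨fun x n => by exact_mod_cast h_orbit n x, fun x n => h_orbit _ x, fun x hx => ⟨?_, ?_⟩⟩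
  · intro hb
    have hr : ‖b‖ < 1 := hb
    exact ⟨injective_pow_mul_add hb0 hr (sub_ne_zero.mpr hx) c, tendsto_pow_mul_add hr _ c⟩
  · intro hb
    have hr : ‖b⁻¹‖ < 1 := by rw [norm_inv]; exact inv_lt_one_of_one_lt₀ hb
    simp only [hneg]
    exact ⟨injective_pow_mul_add (inv_ne_zero hb0) hr (sub_ne_zero.mpr hx) c,
      tendsto_pow_mul_add hr _ c⟩

/-- For `b ∉ {0, 1, -1}` and `c = b/(b-1)`, any solution `y` of
`y(x+1) = y(bx)` satisfies `y(bⁿ(x-c)+c) = y x` and `y(b⁻ⁿ(x-c)+c) = y x` for all `x` and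
`n ∈ ℕ`; moreover, for `x ≠ c`, if `|b| < 1` the points `bⁿ(x-c)+c` are pairwise distinct
and converge to `c`, and if `|b| > 1` the points `b⁻ⁿ(x-c)+c` are pairwise distinct and
converge to `c`. -/
theorem stmt_19 (b : ℝ) (hb0 : b ≠ 0) (hb1 : b ≠ 1) (hbm1 : b ≠ -1)
    (c : ℝ) (hc : c = b / (b - 1))
    (y : ℝ → ℝ) (hy : ∀ x : ℝ, y (x + 1) = y (b * x)) :
    (∀ x : ℝ, ∀ n : ℕ, y (b ^ n * (x - c) + c) = y x) ∧
    (∀ x : ℝ, ∀ n : ℕ, y (b ^ (-(n : ℤ)) * (x - c) + c) = y x) ∧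
    (∀ x : ℝ, x ≠ c →
      (|b| < 1 →
        Function.Injective (fun n : ℕ => b ^ n * (x - c) + c) ∧
        Filter.Tendsto (fun n : ℕ => b ^ n * (x - c) + c) Filter.atTop (nhds c)) ∧
      (|b| > 1 →
        Function.Injective (fun n : ℕ => b ^ (-(n : ℤ)) * (x - c) + c) ∧
        Filter.Tendsto (fun n : ℕ => b ^ (-(n : ℤ)) * (x - c) + c) Filter.atTop (nhds c))) :=
  stmt_19_general b hb0 hb1 c hc y hy
end
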